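/- (Bilevel-to-MPCC direction.) Consider the optimistic bilevel problem (BP): minimize θ_l(x,y) over x ∈ X and y ∈ S(x), where S(x) is the set of minimizers of θ_f(x,·) over K(x) = {y : h_i(x,y) = 0 for i ∈ I, g_j(x,y) ≤ 0 for j ∈ J}. Assume θ_f(x,·) is convex and C¹ for every x ∈ X, g_j(x,·) is convex and C¹ for every x and j, h_i(x,·) is affine for every x and i, and for every x ∈ X the set K(x) satisfies the Abadie constraint qualification (T_{K(x)}(y) = L_{K(x)}(y) for all y ∈ K(x)). If (x̄, ȳ) is an optimal solution of (BP), then there exist λ̄ ∈ ℝ^I and μ̄ ∈ ℝ^J such that (x̄, ȳ, λ̄, μ̄) is an optimal solution of the MPCC: minimize θ_l(x,y) over tuples (x,y,λ,μ) with x ∈ X satisfying ∇_y θ_f(x,y) + Σ_i λ_i ∇_y h_i(x,y) + Σ_j μ_j ∇_y g_j(x,y) = 0, μ_j ≥ 0 and μ_j g_j(x,y) = 0 for all j ∈ J, h_i(x,y) = 0 for all i ∈ I, and g_j(x,y) ≤ 0 for all j ∈ J. -/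

import Mathlib

/-!
At a lower-level solution `ȳ` of `min θ_f(x̄,·)` over `K(x̄)`, first-order optimality gives
`⟪∇θ_f, ν⟫ ≥ 0` on the Bouligand tangent cone, which the Abadie condition identifies with the
linearized cone. Farkas' lemma (finitely generated cones are closed, by conic Carathéodory) turns
this into KKT multipliers, so `(x̄, ȳ, λ̄, μ̄)` is MPCC-feasible. Conversely, for a convex lower
level with affine equalities any KKT point is a global lower-level minimizer, so every
MPCC-feasible point is bilevel-feasible and the optimality of `(x̄, ȳ)` transfers.
-/

open Filter Topology RealInnerProductSpace

noncomputable section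

/-- The Bouligand tangent cone: directions `ν` such that there are sequences `νₖ → ν` and
`tₖ → 0⁺` with `y + tₖ • νₖ ∈ Y` for every `k`. -/
def bouligandTangentCone {E : Type*} [NormedAddCommGroup E] [InnerProductSpace ℝ E]
    (Y : Set E) (y : E) : Set E :=
  {ν | ∃ (νs : ℕ → E) (t : ℕ → ℝ),
    Tendsto νs atTop (𝓝 ν) ∧ (∀ k, 0 < t k) ∧ Tendsto t atTop (𝓝 0) ∧
    ∀ k, y + t k • νs k ∈ Y}

/-- The lower-level feasible set `K(x)` described by `hᵢ(x,y) = 0` and `gⱼ(x,y) ≤ 0`. -/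
def lowerFeasSet {p q : ℕ} {I J : Type*}
    (hI : I → EuclideanSpace ℝ (Fin p) → EuclideanSpace ℝ (Fin q) → ℝ)
    (gJ : J → EuclideanSpace ℝ (Fin p) → EuclideanSpace ℝ (Fin q) → ℝ)
    (x : EuclideanSpace ℝ (Fin p)) : Set (EuclideanSpace ℝ (Fin q)) :=
  {y | (∀ i, hI i x y = 0) ∧ ∀ j, gJ j x y ≤ 0}

/-- The linearized tangent cone of `K(x)` at `y`, taken with respect to the `y`-variable. -/
def linearizedConeLower {p q : ℕ} {I J : Type*}
    (hI : I → EuclideanSpace ℝ (Fin p) → EuclideanSpace ℝ (Fin q) → ℝ)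
    (gJ : J → EuclideanSpace ℝ (Fin p) → EuclideanSpace ℝ (Fin q) → ℝ)
    (x : EuclideanSpace ℝ (Fin p)) (y : EuclideanSpace ℝ (Fin q)) :
    Set (EuclideanSpace ℝ (Fin q)) :=
  {ν | (∀ i, ⟪gradient (hI i x) y, ν⟫ = 0) ∧
    ∀ j, gJ j x y = 0 → ⟪gradient (gJ j x) y, ν⟫ ≤ 0}

/-- The lower-level solution set `S(x)`: minimizers of `θ_f(x,·)` over `K(x)`. -/
def lowerSolSet {p q : ℕ} {I J : Type*}
    (θf : EuclideanSpace ℝ (Fin p) → EuclideanSpace ℝ (Fin q) → ℝ)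
    (hI : I → EuclideanSpace ℝ (Fin p) → EuclideanSpace ℝ (Fin q) → ℝ)
    (gJ : J → EuclideanSpace ℝ (Fin p) → EuclideanSpace ℝ (Fin q) → ℝ)
    (x : EuclideanSpace ℝ (Fin p)) : Set (EuclideanSpace ℝ (Fin q)) :=
  {y ∈ lowerFeasSet hI gJ x | ∀ y' ∈ lowerFeasSet hI gJ x, θf x y ≤ θf x y'}

/-- Feasibility for the MPCC reformulation: `x ∈ X`, stationarity of the lower-level
Lagrangian in `y`, nonnegativity of `μ`, complementary slackness, and lower-level
feasibility of `(x,y)`. -/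
def MPCCFeasible {p q : ℕ} {I J : Type*} [Fintype I] [Fintype J]
    (X : Set (EuclideanSpace ℝ (Fin p)))
    (θf : EuclideanSpace ℝ (Fin p) → EuclideanSpace ℝ (Fin q) → ℝ)
    (hI : I → EuclideanSpace ℝ (Fin p) → EuclideanSpace ℝ (Fin q) → ℝ)
    (gJ : J → EuclideanSpace ℝ (Fin p) → EuclideanSpace ℝ (Fin q) → ℝ)
    (x : EuclideanSpace ℝ (Fin p)) (y : EuclideanSpace ℝ (Fin q))
    (lam : I → ℝ) (mu : J → ℝ) : Prop :=
  x ∈ X ∧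
  gradient (θf x) y + ∑ i, lam i • gradient (hI i x) y
    + ∑ j, mu j • gradient (gJ j x) y = 0 ∧
  (∀ j, 0 ≤ mu j) ∧ (∀ j, mu j * gJ j x y = 0) ∧
  (∀ i, hI i x y = 0) ∧ (∀ j, gJ j x y ≤ 0)

open Finset in
theorem exists_nonneg_sum_smul_eq_of_sum_smul_eq_zero {𝕜 M ι : Type*} [Field 𝕜] [LinearOrder 𝕜]
    [IsStrictOrderedRing 𝕜] [AddCommGroup M] [Module 𝕜 M] {v : ι → M} {s : Finset ι}
    {c g : ι → 𝕜} (hc : ∀ i ∈ s, 0 ≤ c i) (hg : ∑ i ∈ s, g i • v i = 0)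
    (hpos : ∃ i ∈ s, 0 < g i) :
    ∃ i₀ ∈ s, ∃ c' : ι → 𝕜, (∀ i ∈ s, 0 ≤ c' i) ∧ c' i₀ = 0 ∧
      ∑ i ∈ s, c' i • v i = ∑ i ∈ s, c i • v i := by
  classical
  obtain ⟨i₀, hi₀, hmin⟩ := (s.filter (0 < g ·)).exists_min_image (fun i => c i / g i) <| by
    obtain ⟨i, hi, hgi⟩ := hpos
    exact ⟨i, mem_filter.2 ⟨hi, hgi⟩⟩
  obtain ⟨hi₀s, hgi₀⟩ := mem_filter.1 hi₀
  -- `τ` is the largest step along `-g` that keeps `c - τ • g` nonnegative on `s`.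
  set τ := c i₀ / g i₀
  have hτ : 0 ≤ τ := div_nonneg (hc i₀ hi₀s) hgi₀.le
  refine ⟨i₀, hi₀s, fun i => c i - τ * g i, fun i hi => sub_nonneg.2 ?_, ?_, ?_⟩
  · rcases lt_or_ge 0 (g i) with hgi | hgi
    · exact (le_div_iff₀ hgi).1 (hmin i (mem_filter.2 ⟨hi, hgi⟩))
    · exact (mul_nonpos_of_nonneg_of_nonpos hτ hgi).trans (hc i hi)
  · simp [τ, div_mul_cancel₀ _ hgi₀.ne']
  · simp [sub_smul, mul_smul, sum_sub_distrib, ← smul_sum, hg]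

open Finset in
theorem exists_linearIndepOn_nonneg_sum_smul_eq {𝕜 M ι : Type*} [Field 𝕜] [LinearOrder 𝕜]
    [IsStrictOrderedRing 𝕜] [AddCommGroup M] [Module 𝕜 M] (v : ι → M) (s : Finset ι)
    (c : ι → 𝕜) (hc : ∀ i ∈ s, 0 ≤ c i) :
    ∃ t ⊆ s, LinearIndepOn 𝕜 v (t : Set ι) ∧
      ∃ d : ι → 𝕜, (∀ i ∈ t, 0 ≤ d i) ∧ ∑ i ∈ t, d i • v i = ∑ i ∈ s, c i • v i := by
  classical
  induction s using Finset.strongInduction generalizing c with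
  | H s ih =>
  by_cases hli : LinearIndepOn 𝕜 v (s : Set ι)
  · exact ⟨s, subset_rfl, hli, c, hc, rfl⟩
  obtain ⟨g, hg, hpos⟩ : ∃ g : ι → 𝕜, ∑ i ∈ s, g i • v i = 0 ∧ ∃ i ∈ s, 0 < g i := by
    obtain ⟨g, hg, i, hi, hgi⟩ := not_linearIndepOn_finset_iff.1 hli
    rcases hgi.lt_or_gt with hneg | hpos
    · exact ⟨-g, by simp [neg_smul, hg], i, hi, neg_pos.2 hneg⟩
    · exact ⟨g, hg, i, hi, hpos⟩
  obtain ⟨i₀, hi₀, c', hc', hc'i₀, hsum⟩ := exists_nonneg_sum_smul_eq_of_sum_smul_eq_zero hc hg hpos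
  obtain ⟨t, hts, hli, d, hd, hdsum⟩ :=
    ih (s.erase i₀) (erase_ssubset hi₀) c' fun i hi => hc' i (mem_of_mem_erase hi)
  refine ⟨t, hts.trans (erase_subset _ _), hli, d, hd, ?_⟩
  rw [hdsum, sum_erase _ (by simp [hc'i₀]), hsum]

open Finset Set in
theorem PointedCone.isClosed_hull_range {E ι : Type*} [NormedAddCommGroup E] [NormedSpace ℝ E]
    [FiniteDimensional ℝ E] [Fintype ι] (v : ι → E) :
    IsClosed (PointedCone.hull ℝ (range v) : Set E) := by
  classical
  -- By conic Carathéodory, the cone is a finite union of injective linear images of orthants.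
  have hunion : (PointedCone.hull ℝ (range v) : Set E) =
      ⋃ t : {t : Finset ι // LinearIndepOn ℝ v (t : Set ι)},
        Fintype.linearCombination ℝ (fun i : (t : Finset ι) => v i) '' univ.pi fun _ => Ici 0 := by
    ext x
    constructor
    · intro hx
      obtain ⟨c, rfl⟩ := (Submodule.mem_span_range_iff_exists_fun _).1 hx
      obtain ⟨t, -, hli, d, hd, hdsum⟩ :=
        exists_linearIndepOn_nonneg_sum_smul_eq v univ (fun i => (c i : ℝ)) fun i _ => (c i).2
      refine mem_iUnion.2 ⟨⟨t, hli⟩, fun i => d i, fun i _ => hd i i.2, ?_⟩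
      simpa [Fintype.linearCombination_apply, sum_attach t (fun i => d i • v i)] using hdsum
    · simp only [mem_iUnion, mem_image, mem_univ_pi, Set.mem_Ici]
      rintro ⟨⟨t, _⟩, d, hd, rfl⟩
      refine Submodule.sum_mem _ fun i _ => ?_
      exact Submodule.smul_mem _ (⟨d i, hd i⟩ : {c : ℝ // 0 ≤ c})
        (Submodule.subset_span (mem_range_self (i : ι)))
  rw [hunion]
  refine isClosed_iUnion_of_finite fun ⟨t, hli⟩ => ?_
  refine (LinearMap.isClosedEmbedding_of_injective ?_).isClosedMap _
    (isClosed_set_pi fun _ _ => isClosed_Ici)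
  exact LinearMap.ker_eq_bot.2 hli.fintypeLinearCombination_injective

section InnerProductSpace

variable {E : Type*} [NormedAddCommGroup E] [InnerProductSpace ℝ E]

theorem exists_nonneg_sum_smul_eq_of_inner_nonpos [FiniteDimensional ℝ E] {ι : Type*} [Fintype ι]
    (v : ι → E) (b : E) (h : ∀ ν, (∀ i, ⟪v i, ν⟫ ≤ 0) → ⟪b, ν⟫ ≤ 0) :
    ∃ μ : ι → ℝ, (∀ i, 0 ≤ μ i) ∧ ∑ i, μ i • v i = b := by
  let C : ProperCone ℝ E := ⟨PointedCone.hull ℝ (Set.range v), PointedCone.isClosed_hull_range v⟩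
  by_cases hb : b ∈ C
  · obtain ⟨c, hc⟩ := (Submodule.mem_span_range_iff_exists_fun _).1 hb
    exact ⟨fun i => c i, fun i => (c i).2, hc⟩
  obtain ⟨y, hCy, hby⟩ := ProperCone.hyperplane_separation' C hb
  have hv : ∀ i, ⟪v i, -y⟫ ≤ 0 := fun i => by
    simpa [inner_neg_right] using hCy (v i) (Submodule.subset_span (Set.mem_range_self i))
  have := h (-y) hv
  rw [inner_neg_right] at this
  linarith

theorem exists_multipliers_of_inner_nonneg [FiniteDimensional ℝ E] {ι κ : Type*} [Fintype ι]
    [Fintype κ] (a : E) (b : ι → E) (c : κ → E) (s : Set κ)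
    (h : ∀ ν, (∀ i, ⟪b i, ν⟫ = 0) → (∀ j ∈ s, ⟪c j, ν⟫ ≤ 0) → 0 ≤ ⟪a, ν⟫) :
    ∃ (lam : ι → ℝ) (mu : κ → ℝ), a + ∑ i, lam i • b i + ∑ j, mu j • c j = 0 ∧
      (∀ j, 0 ≤ mu j) ∧ ∀ j ∉ s, mu j = 0 := by
  classical
  -- Each equality is a pair of opposite inequalities; inactive constraints get the zero vector.
  let v : (ι ⊕ ι) ⊕ κ → E := Sum.elim (Sum.elim b (-b)) fun j => if j ∈ s then c j else 0
  obtain ⟨μ, hμ, hμv⟩ := exists_nonneg_sum_smul_eq_of_inner_nonpos v (-a) fun ν hν => by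
    have hb : ∀ i, ⟪b i, ν⟫ = 0 := fun i => by
      have h₁ := hν (.inl (.inl i))
      have h₂ := hν (.inl (.inr i))
      simp only [v, Sum.elim_inl, Sum.elim_inr, Pi.neg_apply, inner_neg_left] at h₁ h₂
      linarith
    have hc : ∀ j ∈ s, ⟪c j, ν⟫ ≤ 0 := fun j hj => by
      simpa [v, hj] using hν (.inr j)
    simpa [inner_neg_left] using h ν hb hc
  refine ⟨fun i => μ (.inl (.inl i)) - μ (.inl (.inr i)),
    fun j => if j ∈ s then μ (.inr j) else 0, ?_, fun j => ?_, fun j hj => if_neg hj⟩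
  · simp only [v, Fintype.sum_sum_type, Sum.elim_inl, Sum.elim_inr, Pi.neg_apply, smul_neg,
      Finset.sum_neg_distrib, smul_ite, smul_zero] at hμv
    simp only [sub_smul, Finset.sum_sub_distrib, ite_smul, zero_smul]
    rw [← neg_neg a, ← hμv]
    abel
  · dsimp only
    split_ifs
    exacts [hμ _, le_rfl]

theorem bouligandTangentCone_subset_posTangentConeAt (Y : Set E) (y : E) :
    bouligandTangentCone Y y ⊆ posTangentConeAt Y y := by
  rintro ν ⟨νs, t, hνs, ht, ht0, hmem⟩
  refine mem_tangentConeAt_of_seq atTop (fun k => (t k)⁻¹.toNNReal)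
    (fun k => t k • νs k) ?_ (Eventually.of_forall hmem) ?_
  · simpa using ht0.smul hνs
  · refine hνs.congr fun k => ?_
    rw [NNReal.smul_def, Real.coe_toNNReal _ (inv_pos.2 (ht k)).le, smul_smul,
      inv_mul_cancel₀ (ht k).ne', one_smul]

theorem IsMinOn.inner_gradient_nonneg_of_mem_bouligandTangentCone [CompleteSpace E] {f : E → ℝ}
    {Y : Set E} {y ν : E} (hmin : IsMinOn f Y y) (hf : DifferentiableAt ℝ f y)
    (hν : ν ∈ bouligandTangentCone Y y) :
    0 ≤ ⟪gradient f y, ν⟫ := by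
  rw [inner_gradient_left]
  exact hmin.localize.hasFDerivWithinAt_nonneg hf.hasFDerivAt.hasFDerivWithinAt
    (bouligandTangentCone_subset_posTangentConeAt Y y hν)

theorem ConvexOn.add_inner_gradient_le [CompleteSpace E] {f : E → ℝ} {s : Set E} {x y : E}
    (hf : ConvexOn ℝ s f) (hx : x ∈ s) (hy : y ∈ s) (hfx : DifferentiableAt ℝ f x) :
    f x + ⟪gradient f x, y - x⟫ ≤ f y := by
  have hderiv : HasDerivAt (f ∘ AffineMap.lineMap x y) ⟪gradient f x, y - x⟫ (0 : ℝ) := by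
    rw [inner_gradient_left]
    exact hfx.hasFDerivAt.comp_hasDerivAt_of_eq 0 AffineMap.hasDerivAt_lineMap
      (AffineMap.lineMap_apply_zero x y).symm
  have := (hf.comp_affineMap (AffineMap.lineMap x y)).le_slope_of_hasDerivAt
    (by simpa using hx) (by simpa using hy) zero_lt_one hderiv
  simp only [slope_def_field, Function.comp_apply, AffineMap.lineMap_apply_one,
    AffineMap.lineMap_apply_zero, sub_zero, div_one] at this
  linarith

theorem inner_gradient_sub_eq_of_eq_add_const [FiniteDimensional ℝ E] {h : E → ℝ}
    {φ : E →ₗ[ℝ] ℝ} {c : ℝ} (hφ : ∀ z, h z = φ z + c) (y z : E) :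
    ⟪gradient h y, z - y⟫ = h z - h y := by
  have hderiv : HasFDerivAt h (LinearMap.toContinuousLinearMap φ) y := by
    rw [show h = fun z => φ z + c from funext hφ]
    exact (LinearMap.toContinuousLinearMap φ).hasFDerivAt.add_const c
  rw [inner_gradient_left, hderiv.fderiv, hφ, hφ]
  simp

theorem isMinOn_of_kkt [FiniteDimensional ℝ E] {ι κ : Type*} [Fintype ι] [Fintype κ]
    {f : E → ℝ} {h : ι → E → ℝ} {g : κ → E → ℝ} {y : E} {lam : ι → ℝ} {mu : κ → ℝ}
    (hf : ConvexOn ℝ Set.univ f) (hfy : DifferentiableAt ℝ f y)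
    (hh : ∀ i, ∃ (φ : E →ₗ[ℝ] ℝ) (c : ℝ), ∀ z, h i z = φ z + c)
    (hg : ∀ j, ConvexOn ℝ Set.univ (g j)) (hgy : ∀ j, DifferentiableAt ℝ (g j) y)
    (hstat : gradient f y + ∑ i, lam i • gradient (h i) y + ∑ j, mu j • gradient (g j) y = 0)
    (hmu : ∀ j, 0 ≤ mu j) (hcompl : ∀ j, mu j * g j y = 0) (hhy : ∀ i, h i y = 0) :
    IsMinOn f {z | (∀ i, h i z = 0) ∧ ∀ j, g j z ≤ 0} y := by
  refine isMinOn_iff.2 fun z ⟨hhz, hgz⟩ => ?_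
  have heq : ∀ i, ⟪lam i • gradient (h i) y, z - y⟫ = 0 := fun i => by
    obtain ⟨φ, c, hφ⟩ := hh i
    rw [real_inner_smul_left, inner_gradient_sub_eq_of_eq_add_const hφ, hhz, hhy, sub_zero,
      mul_zero]
  have hineq : ∀ j, ⟪mu j • gradient (g j) y, z - y⟫ ≤ 0 := fun j => by
    have hgrad := (hg j).add_inner_gradient_le (Set.mem_univ _) (Set.mem_univ _) (hgy j) (y := z)
    rw [real_inner_smul_left]
    nlinarith [hmu j, hcompl j, hgz j]
  have hnonneg : 0 ≤ ⟪gradient f y, z - y⟫ := by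
    have := congrArg (⟪·, z - y⟫) hstat
    simp only [inner_add_left, sum_inner, inner_zero_left, Finset.sum_eq_zero fun i _ => heq i,
      add_zero] at this
    linarith [Finset.sum_nonpos fun j (_ : j ∈ Finset.univ) => hineq j]
  linarith [hf.add_inner_gradient_le (Set.mem_univ _) (Set.mem_univ _) hfy (y := z)]

end InnerProductSpace

theorem bilevel_to_MPCC_general {p q : ℕ} {I J : Type*} [Fintype I] [Fintype J]
    (X : Set (EuclideanSpace ℝ (Fin p)))
    (θl θf : EuclideanSpace ℝ (Fin p) → EuclideanSpace ℝ (Fin q) → ℝ)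
    (hI : I → EuclideanSpace ℝ (Fin p) → EuclideanSpace ℝ (Fin q) → ℝ)
    (gJ : J → EuclideanSpace ℝ (Fin p) → EuclideanSpace ℝ (Fin q) → ℝ)
    (hθf : ∀ x ∈ X, ConvexOn ℝ Set.univ (θf x) ∧ ContDiff ℝ 1 (θf x))
    (hg : ∀ x ∈ X, ∀ j, ConvexOn ℝ Set.univ (gJ j x) ∧ ContDiff ℝ 1 (gJ j x))
    (hh : ∀ x ∈ X, ∀ i, ∃ (φ : EuclideanSpace ℝ (Fin q) →ₗ[ℝ] ℝ) (c : ℝ),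
      ∀ y, hI i x y = φ y + c)
    (hCQ : ∀ x ∈ X, ∀ y ∈ lowerFeasSet hI gJ x,
      bouligandTangentCone (lowerFeasSet hI gJ x) y = linearizedConeLower hI gJ x y)
    (xbar : EuclideanSpace ℝ (Fin p)) (ybar : EuclideanSpace ℝ (Fin q))
    (hfeas : xbar ∈ X ∧ ybar ∈ lowerSolSet θf hI gJ xbar)
    (hopt : ∀ x ∈ X, ∀ y ∈ lowerSolSet θf hI gJ x, θl xbar ybar ≤ θl x y) :
    ∃ (lambar : I → ℝ) (mubar : J → ℝ),
      MPCCFeasible X θf hI gJ xbar ybar lambar mubar ∧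
      ∀ (x : EuclideanSpace ℝ (Fin p)) (y : EuclideanSpace ℝ (Fin q))
        (lam : I → ℝ) (mu : J → ℝ),
        MPCCFeasible X θf hI gJ x y lam mu → θl xbar ybar ≤ θl x y := by
  obtain ⟨hxX, hyK, hymin⟩ := hfeas
  have hfirstOrder : ∀ ν, (∀ i, ⟪gradient (hI i xbar) ybar, ν⟫ = 0) →
      (∀ j ∈ {j | gJ j xbar ybar = 0}, ⟪gradient (gJ j xbar) ybar, ν⟫ ≤ 0) →
      0 ≤ ⟪gradient (θf xbar) ybar, ν⟫ := fun ν hνh hνg =>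
    (isMinOn_iff.2 hymin).inner_gradient_nonneg_of_mem_bouligandTangentCone
      ((hθf xbar hxX).2.differentiable one_ne_zero ybar)
      (by rw [hCQ xbar hxX ybar hyK]; exact ⟨hνh, hνg⟩)
  obtain ⟨lambar, mubar, hstat, hmu, hinactive⟩ :=
    exists_multipliers_of_inner_nonneg _ _ _ _ hfirstOrder
  have hcompl : ∀ j, mubar j * gJ j xbar ybar = 0 := fun j => by
    by_cases hj : gJ j xbar ybar = 0
    · rw [hj, mul_zero]
    · rw [hinactive j hj, zero_mul]
  refine ⟨lambar, mubar, ⟨hxX, hstat, hmu, hcompl, hyK⟩, ?_⟩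
  rintro x y lam mu ⟨hx, hstat', hmu', hcompl', hhy, hgy⟩
  have hymin' := isMinOn_of_kkt (hθf x hx).1 ((hθf x hx).2.differentiable one_ne_zero y) (hh x hx)
    (fun j => (hg x hx j).1) (fun j => (hg x hx j).2.differentiable one_ne_zero y) hstat' hmu'
    hcompl' hhy
  exact hopt x hx y ⟨⟨hhy, hgy⟩, isMinOn_iff.1 hymin'⟩

/-- Bilevel-to-MPCC: under convexity of the lower level and the Abadie CQ for `K(x)` at every
feasible point, any optimal solution `(x̄, ȳ)` of the optimistic bilevel problem admits
multipliers `(λ̄, μ̄)` making `(x̄, ȳ, λ̄, μ̄)` an optimal solution of the MPCC reformulation. -/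
theorem bilevel_to_MPCC {p q : ℕ} {I J : Type*} [Fintype I] [Fintype J]
    (X : Set (EuclideanSpace ℝ (Fin p)))
    (θl θf : EuclideanSpace ℝ (Fin p) → EuclideanSpace ℝ (Fin q) → ℝ)
    (hI : I → EuclideanSpace ℝ (Fin p) → EuclideanSpace ℝ (Fin q) → ℝ)
    (gJ : J → EuclideanSpace ℝ (Fin p) → EuclideanSpace ℝ (Fin q) → ℝ)
    (hθf : ∀ x ∈ X, ConvexOn ℝ Set.univ (θf x) ∧ ContDiff ℝ 1 (θf x))
    (hg : ∀ x ∈ X, ∀ j, ConvexOn ℝ Set.univ (gJ j x) ∧ ContDiff ℝ 1 (gJ j x))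
    (hh : ∀ x ∈ X, ∀ i, ∃ (φ : EuclideanSpace ℝ (Fin q) →ₗ[ℝ] ℝ) (c : ℝ),
      ∀ y, hI i x y = φ y + c)
    (hKne : ∀ x ∈ X, (lowerFeasSet hI gJ x).Nonempty)
    (hKcpt : ∀ x ∈ X, IsCompact (lowerFeasSet hI gJ x))
    (hCQ : ∀ x ∈ X, ∀ y ∈ lowerFeasSet hI gJ x,
      bouligandTangentCone (lowerFeasSet hI gJ x) y = linearizedConeLower hI gJ x y)
    (xbar : EuclideanSpace ℝ (Fin p)) (ybar : EuclideanSpace ℝ (Fin q))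
    (hfeas : xbar ∈ X ∧ ybar ∈ lowerSolSet θf hI gJ xbar)
    (hopt : ∀ x ∈ X, ∀ y ∈ lowerSolSet θf hI gJ x, θl xbar ybar ≤ θl x y) :
    ∃ (lambar : I → ℝ) (mubar : J → ℝ),
      MPCCFeasible X θf hI gJ xbar ybar lambar mubar ∧
      ∀ (x : EuclideanSpace ℝ (Fin p)) (y : EuclideanSpace ℝ (Fin q))
        (lam : I → ℝ) (mu : J → ℝ),
        MPCCFeasible X θf hI gJ x y lam mu → θl xbar ybar ≤ θl x y :=
  bilevel_to_MPCC_general X θl θf hI gJ hθf hg hh hCQ xbar ybar hfeas hopt
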